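/- arXiv:2301.01001 — 3 statements merged into one kernel-verified Lean document; each statement's English description precedes it below -/
import Mathlib

section
/- Let b > 0 be a real constant and let Q : ℝ → ℝ be twice differentiable on the open interval (-b, b). If Q satisfies the linear ODE (b² - s²)·Q''(s) - s·Q'(s) + Q(s) = 0 for every s ∈ (-b, b), then there exist real constants k₁ and k₂ such that Q(s) = k₁·s + k₂·√(b² - s²) for all s ∈ (-b, b). -/
/-!
Solving `Q = c₁ s + c₂ √(b² - s²)`, `Q' = c₁ - c₂ s / √(b² - s²)` by Cramer's rule (the Wronskian
of `s` and `√(b² - s²)` is `-b² / √(b² - s²)`) gives `c₁ = (s Q + (b² - s²) Q') / b²` and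
`c₂ = (Q - s Q') √(b² - s²) / b²` as functions of `s`. Their derivatives are multiples of the
left-hand side of the ODE, so both are first integrals, hence constant on the connected
interval `(-b, b)`.
-/

open Set

noncomputable def linCoeff (b : ℝ) (Q : ℝ → ℝ) (s : ℝ) : ℝ :=
  (s * Q s + (b ^ 2 - s ^ 2) * deriv Q s) / b ^ 2

noncomputable def sqrtCoeff (b : ℝ) (Q : ℝ → ℝ) (s : ℝ) : ℝ :=
  (Q s - s * deriv Q s) * √(b ^ 2 - s ^ 2) / b ^ 2

section FirstIntegrals

variable {b s : ℝ} {Q : ℝ → ℝ}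

theorem hasDerivAt_sq_sub_sq (b s : ℝ) :
    HasDerivAt (fun x : ℝ => b ^ 2 - x ^ 2) (-(2 * s)) s := by
  simpa using (hasDerivAt_pow 2 s).const_sub (b ^ 2)

theorem hasDerivAt_sqrt_sq_sub_sq (hs : s ^ 2 < b ^ 2) :
    HasDerivAt (fun x : ℝ => √(b ^ 2 - x ^ 2)) (-s / √(b ^ 2 - s ^ 2)) s := by
  have hpos : 0 < b ^ 2 - s ^ 2 := sub_pos.mpr hs
  refine ((Real.hasDerivAt_sqrt hpos.ne').comp s (hasDerivAt_sq_sub_sq b s)).congr_deriv ?_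
  field_simp

theorem hasDerivAt_linCoeff (hQ : DifferentiableAt ℝ Q s)
    (hQ' : DifferentiableAt ℝ (deriv Q) s)
    (hODE : (b ^ 2 - s ^ 2) * deriv (deriv Q) s - s * deriv Q s + Q s = 0) :
    HasDerivAt (linCoeff b Q) 0 s := by
  have h := (((hasDerivAt_id s).mul hQ.hasDerivAt).add
    ((hasDerivAt_sq_sub_sq b s).mul hQ'.hasDerivAt)).div_const (b ^ 2)
  refine h.congr_deriv (div_eq_zero_iff.mpr (Or.inl ?_))
  simp only [id_eq]
  linear_combination hODE

theorem hasDerivAt_sqrtCoeff (hs : s ^ 2 < b ^ 2) (hQ : DifferentiableAt ℝ Q s)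
    (hQ' : DifferentiableAt ℝ (deriv Q) s)
    (hODE : (b ^ 2 - s ^ 2) * deriv (deriv Q) s - s * deriv Q s + Q s = 0) :
    HasDerivAt (sqrtCoeff b Q) 0 s := by
  have h := ((hQ.hasDerivAt.sub ((hasDerivAt_id s).mul hQ'.hasDerivAt)).mul
    (hasDerivAt_sqrt_sq_sub_sq hs)).div_const (b ^ 2)
  refine h.congr_deriv (div_eq_zero_iff.mpr (Or.inl ?_))
  have hsqrt := Real.sq_sqrt (sub_pos.mpr hs).le
  have hne : √(b ^ 2 - s ^ 2) ≠ 0 := (Real.sqrt_pos.mpr (sub_pos.mpr hs)).ne'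
  simp only [Pi.sub_apply, Pi.mul_apply, id_eq]
  field_simp
  linear_combination -s * hODE - s * deriv (deriv Q) s * hsqrt

theorem linCoeff_mul_add_sqrtCoeff_mul (hs : s ^ 2 < b ^ 2) :
    linCoeff b Q s * s + sqrtCoeff b Q s * √(b ^ 2 - s ^ 2) = Q s := by
  have hb : b ≠ 0 := by rintro rfl; nlinarith
  have hsqrt := Real.sq_sqrt (sub_pos.mpr hs).le
  unfold linCoeff sqrtCoeff
  field_simp
  linear_combination (Q s - s * deriv Q s) * hsqrt

end FirstIntegrals

theorem exists_eq_const_of_hasDerivAt_eq_zero {E : Type*} [NormedAddCommGroup E]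
    [NormedSpace ℝ E] {f : ℝ → E} {U : Set ℝ} (hU : IsOpen U) (hU' : IsPreconnected U)
    (hf : ∀ x ∈ U, HasDerivAt f 0 x) : ∃ a, ∀ x ∈ U, f x = a :=
  hU.exists_is_const_of_deriv_eq_zero hU'
    (fun x hx => (hf x hx).differentiableAt.differentiableWithinAt)
    (fun x hx => (hf x hx).deriv)

theorem stmt_0_general (b : ℝ) (Q : ℝ → ℝ)
    (hQ1 : ∀ s ∈ Set.Ioo (-b) b, DifferentiableAt ℝ Q s)
    (hQ2 : ∀ s ∈ Set.Ioo (-b) b, DifferentiableAt ℝ (deriv Q) s)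
    (hODE : ∀ s ∈ Set.Ioo (-b) b,
      (b ^ 2 - s ^ 2) * deriv (deriv Q) s - s * deriv Q s + Q s = 0) :
    ∃ k₁ k₂ : ℝ, ∀ s ∈ Set.Ioo (-b) b,
      Q s = k₁ * s + k₂ * Real.sqrt (b ^ 2 - s ^ 2) := by
  have hsq : ∀ s ∈ Ioo (-b) b, s ^ 2 < b ^ 2 := fun s hs => sq_lt_sq' hs.1 hs.2
  obtain ⟨k₁, hk₁⟩ := exists_eq_const_of_hasDerivAt_eq_zero isOpen_Ioo isPreconnected_Ioo
    fun s hs => hasDerivAt_linCoeff (hQ1 s hs) (hQ2 s hs) (hODE s hs)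
  obtain ⟨k₂, hk₂⟩ := exists_eq_const_of_hasDerivAt_eq_zero isOpen_Ioo isPreconnected_Ioo
    fun s hs => hasDerivAt_sqrtCoeff (hsq s hs) (hQ1 s hs) (hQ2 s hs) (hODE s hs)
  refine ⟨k₁, k₂, fun s hs => ?_⟩
  rw [← hk₁ s hs, ← hk₂ s hs, linCoeff_mul_add_sqrtCoeff_mul (hsq s hs)]

/-- The ODE `(b² - s²)·Q'' - s·Q' + Q = 0` on `(-b, b)` forces
`Q(s) = k₁·s + k₂·√(b² - s²)`. -/
theorem stmt_0 (b : ℝ) (hb : 0 < b) (Q : ℝ → ℝ)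
    (hQ1 : ∀ s ∈ Set.Ioo (-b) b, DifferentiableAt ℝ Q s)
    (hQ2 : ∀ s ∈ Set.Ioo (-b) b, DifferentiableAt ℝ (deriv Q) s)
    (hODE : ∀ s ∈ Set.Ioo (-b) b,
      (b ^ 2 - s ^ 2) * deriv (deriv Q) s - s * deriv Q s + Q s = 0) :
    ∃ k₁ k₂ : ℝ, ∀ s ∈ Set.Ioo (-b) b,
      Q s = k₁ * s + k₂ * Real.sqrt (b ^ 2 - s ^ 2) :=
  stmt_0_general b Q hQ1 hQ2 hODE
end

section
/- Let b > 0, let k₁, k₂ be real constants, let c > 0, and suppose that D(s) := 1 + k₁·s² + k₂·s·√(b² - s²) > 0 for all s ∈ (-b, b). Define φ(s) = c·exp( ∫₀ˢ (k₁·t + k₂·√(b² - t²)) / D(t) dt ) for s ∈ (-b, b). Then φ is differentiable and positive on (-b, b), and for every s ∈ (-b, b): φ(s) - s·φ'(s) = φ(s)/D(s) > 0 and φ'(s)/(φ(s) - s·φ'(s)) = k₁·s + k₂·√(b² - s²). -/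
/-! With `q(t) = k₁t + k₂√(b²-t²)` we have `D = 1 + s·q`, and `φ = c·exp(∫₀ˢ q/D)` solves
`φ' = φ·q/D`. Hence `φ - sφ' = φ(1 - sq/D) = φ/D`, which is positive, and
`φ'/(φ - sφ') = (φq/D)/(φ/D) = q`. -/

open Set

theorem hasDerivAt_mul_exp_integral {g : ℝ → ℝ} {U : Set ℝ} (hU : IsOpen U)
    (hU' : U.OrdConnected) (hg : ContinuousOn g U) {a x : ℝ} (ha : a ∈ U) (hx : x ∈ U)
    (c : ℝ) :
    HasDerivAt (fun y => c * Real.exp (∫ t in a..y, g t))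
      (c * Real.exp (∫ t in a..x, g t) * g x) x := by
  have hint : IntervalIntegrable g MeasureTheory.volume a x :=
    (hg.mono (hU'.uIcc_subset ha hx)).intervalIntegrable
  have hI : HasDerivAt (fun y => ∫ t in a..y, g t) (g x) x :=
    intervalIntegral.integral_hasDerivAt_right hint
      (hg.stronglyMeasurableAtFilter hU x hx) (hg.continuousAt (hU.mem_nhds hx))
  simpa only [mul_assoc] using hI.exp.const_mul c

theorem sub_mul_mul_div_eq_div {φ q D s : ℝ} (hD : D = 1 + s * q) (hD0 : D ≠ 0) :
    φ - s * (φ * (q / D)) = φ / D := by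
  field_simp
  rw [hD]
  ring

theorem mul_div_div_sub_mul_mul_div_eq {φ q D s : ℝ} (hD : D = 1 + s * q) (hD0 : D ≠ 0)
    (hφ : φ ≠ 0) : φ * (q / D) / (φ - s * (φ * (q / D))) = q := by
  rw [sub_mul_mul_div_eq_div hD hD0]
  field_simp

theorem stmt_3_general (b : ℝ) (k₁ k₂ c : ℝ) (hc : 0 < c)
    (D : ℝ → ℝ)
    (hDdef : D = fun s => 1 + k₁ * s ^ 2 + k₂ * s * Real.sqrt (b ^ 2 - s ^ 2))
    (hD : ∀ s ∈ Set.Ioo (-b) b, 0 < D s)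
    (φ : ℝ → ℝ)
    (hφdef : φ = fun s => c * Real.exp (∫ t in (0:ℝ)..s,
        (k₁ * t + k₂ * Real.sqrt (b ^ 2 - t ^ 2)) / D t)) :
    ∀ s ∈ Set.Ioo (-b) b,
      DifferentiableAt ℝ φ s ∧ 0 < φ s ∧
      φ s - s * deriv φ s = φ s / D s ∧ 0 < φ s / D s ∧
      deriv φ s / (φ s - s * deriv φ s)
        = k₁ * s + k₂ * Real.sqrt (b ^ 2 - s ^ 2) := by
  intro s hs
  set q : ℝ → ℝ := fun t => k₁ * t + k₂ * Real.sqrt (b ^ 2 - t ^ 2)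
  have hDq : ∀ t, D t = 1 + t * q t := fun t => by rw [hDdef]; ring
  have hcont : ContinuousOn (fun t => q t / D t) (Ioo (-b) b) :=
    (by fun_prop : Continuous q).continuousOn.div (by rw [hDdef]; fun_prop)
      fun t ht => (hD t ht).ne'
  have h0 : (0 : ℝ) ∈ Ioo (-b) b := ⟨by linarith [hs.1, hs.2], by linarith [hs.1, hs.2]⟩
  have hφ' : HasDerivAt φ (φ s * (q s / D s)) s := by
    subst hφdef
    exact hasDerivAt_mul_exp_integral isOpen_Ioo ordConnected_Ioo hcont h0 hs c
  have hφpos : 0 < φ s := by rw [hφdef]; positivity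
  have hDs := hD s hs
  rw [hφ'.deriv]
  exact ⟨hφ'.differentiableAt, hφpos, sub_mul_mul_div_eq_div (hDq s) hDs.ne',
    div_pos hφpos hDs, mul_div_div_sub_mul_mul_div_eq (hDq s) hDs.ne' hφpos.ne'⟩

/-- the explicit unicorn-type function
`φ(s) = c·exp(∫₀ˢ (k₁t + k₂√(b²-t²))/D(t) dt)` is differentiable and positive on
`(-b, b)`, satisfies `φ - sφ' = φ/D > 0` and `φ'/(φ - sφ') = k₁s + k₂√(b²-s²)`. -/
theorem stmt_3 (b : ℝ) (hb : 0 < b) (k₁ k₂ c : ℝ) (hc : 0 < c)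
    (D : ℝ → ℝ)
    (hDdef : D = fun s => 1 + k₁ * s ^ 2 + k₂ * s * Real.sqrt (b ^ 2 - s ^ 2))
    (hD : ∀ s ∈ Set.Ioo (-b) b, 0 < D s)
    (φ : ℝ → ℝ)
    (hφdef : φ = fun s => c * Real.exp (∫ t in (0:ℝ)..s,
        (k₁ * t + k₂ * Real.sqrt (b ^ 2 - t ^ 2)) / D t)) :
    ∀ s ∈ Set.Ioo (-b) b,
      DifferentiableAt ℝ φ s ∧ 0 < φ s ∧
      φ s - s * deriv φ s = φ s / D s ∧ 0 < φ s / D s ∧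
      deriv φ s / (φ s - s * deriv φ s)
        = k₁ * s + k₂ * Real.sqrt (b ^ 2 - s ^ 2) :=
  stmt_3_general b k₁ k₂ c hc D hDdef hD φ hφdef
end

section
/- Let E be a real inner product space, let b ∈ E be a fixed vector, and for y ∈ E, y ≠ 0, set α(y) = ‖y‖, β(y) = ⟪b, y⟫ and s(y) = β(y)/α(y). Then for every y ≠ 0, s is twice Fréchet differentiable at y and its second derivative at y, evaluated at the pair (b, b), equals -3·s(y)·(‖b‖² - s(y)²)/‖y‖². -/
/-!
Write `D` for the derivative in the direction `b`. Since `D ‖·‖ = s` and `D ⟪b, ·⟫ = ‖b‖²`,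
the quotient rule gives `D s = (‖b‖² - s²) / ‖·‖` on the open set `y ≠ 0`. Differentiating this
identity once more in the direction `b`,
`D² s = (-2 s (‖b‖² - s²) - (‖b‖² - s²) s) / ‖y‖² = -3 s (‖b‖² - s²) / ‖y‖²`.
-/

open scoped RealInnerProductSpace Topology

section Calculus

variable {𝕜 E F : Type*} [NontriviallyNormedField 𝕜] [NormedAddCommGroup E] [NormedSpace 𝕜 E]
  [NormedAddCommGroup F] [NormedSpace 𝕜 F]

theorem fderiv_div_apply {f g : E → 𝕜} {x : E} (hf : DifferentiableAt 𝕜 f x)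
    (hg : DifferentiableAt 𝕜 g x) (hx : g x ≠ 0) (v : E) :
    fderiv 𝕜 (fun z => f z / g z) x v
      = (fderiv 𝕜 f x v * g x - f x * fderiv 𝕜 g x v) / g x ^ 2 := by
  have h : HasFDerivAt (fun z => f z * (g z)⁻¹) _ x :=
    hf.hasFDerivAt.mul ((hasDerivAt_inv hx).comp_hasFDerivAt x hg.hasFDerivAt)
  simp only [div_eq_mul_inv]
  rw [h.fderiv]
  simp only [add_apply, smul_apply, smul_eq_mul]
  field_simp
  ring

theorem fderiv_fderiv_apply {f : E → F} {x : E} (hf : DifferentiableAt 𝕜 (fderiv 𝕜 f) x)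
    (u v : E) :
    fderiv 𝕜 (fderiv 𝕜 f) x u v = fderiv 𝕜 (fun z => fderiv 𝕜 f z v) x u := by
  rw [fderiv_clm_apply hf (differentiableAt_const v)]
  simp

end Calculus

section InnerDivNorm

variable {E : Type*} [NormedAddCommGroup E] [InnerProductSpace ℝ E]

theorem fderiv_norm_apply {y : E} (hy : y ≠ 0) (v : E) :
    fderiv ℝ (fun z : E => ‖z‖) y v = ⟪y, v⟫ / ‖y‖ := by
  have hn : DifferentiableAt ℝ (fun z : E => ‖z‖) y :=
    (contDiffAt_norm ℝ hy (n := 1)).differentiableAt one_ne_zero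
  have hsq := congrArg (· v) ((hn.hasFDerivAt.fun_mul hn.hasFDerivAt).unique
    (by simpa only [sq] using (hasStrictFDerivAt_norm_sq y).hasFDerivAt))
  simp only [add_apply, smul_apply, smul_eq_mul, two_smul, innerSL_apply_apply] at hsq
  have : ‖y‖ ≠ 0 := norm_ne_zero_iff.2 hy
  field_simp
  linarith

theorem contDiffAt_inner_div_norm (b : E) {y : E} (hy : y ≠ 0) {n : WithTop ℕ∞} :
    ContDiffAt ℝ n (fun z : E => ⟪b, z⟫ / ‖z‖) y :=
  (contDiffAt_const.inner ℝ contDiffAt_id).div (contDiffAt_norm ℝ hy) (norm_ne_zero_iff.2 hy)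

theorem fderiv_inner_div_norm_apply_self (b : E) {y : E} (hy : y ≠ 0) :
    fderiv ℝ (fun z : E => ⟪b, z⟫ / ‖z‖) y b = (‖b‖ ^ 2 - (⟪b, y⟫ / ‖y‖) ^ 2) / ‖y‖ := by
  have hb : HasFDerivAt (fun z : E => ⟪b, z⟫) (innerSL ℝ b) y := (innerSL ℝ b).hasFDerivAt
  rw [fderiv_div_apply hb.differentiableAt
    ((contDiffAt_norm ℝ hy (n := 1)).differentiableAt one_ne_zero) (norm_ne_zero_iff.2 hy),
    fderiv_norm_apply hy, hb.fderiv]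
  simp only [innerSL_apply_apply, real_inner_self_eq_norm_sq, real_inner_comm y]
  have : ‖y‖ ≠ 0 := norm_ne_zero_iff.2 hy
  field_simp

theorem fderiv_fderiv_inner_div_norm_apply_self (b : E) {y : E} (hy : y ≠ 0) :
    fderiv ℝ (fderiv ℝ fun z : E => ⟪b, z⟫ / ‖z‖) y b b
      = -3 * (⟪b, y⟫ / ‖y‖) * (‖b‖ ^ 2 - (⟪b, y⟫ / ‖y‖) ^ 2) / ‖y‖ ^ 2 := by
  set s : E → ℝ := fun z => ⟪b, z⟫ / ‖z‖
  change _ = -3 * s y * (‖b‖ ^ 2 - s y ^ 2) / ‖y‖ ^ 2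
  have hs_smooth : ContDiffAt ℝ 2 s y := contDiffAt_inner_div_norm b hy
  have hs_diff : DifferentiableAt ℝ s y := hs_smooth.differentiableAt two_ne_zero
  have hnorm_diff : DifferentiableAt ℝ (fun z : E => ‖z‖) y :=
    (contDiffAt_norm ℝ hy (n := 1)).differentiableAt one_ne_zero
  have hDs : (fun z => fderiv ℝ s z b) =ᶠ[𝓝 y] fun z => (‖b‖ ^ 2 - s z ^ 2) / ‖z‖ := by
    filter_upwards [eventually_ne_nhds hy] with z hz
    exact fderiv_inner_div_norm_apply_self b hz
  have hDs_y : fderiv ℝ s y b = (‖b‖ ^ 2 - s y ^ 2) / ‖y‖ := hDs.self_of_nhds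
  have hDnorm_y : fderiv ℝ (fun z : E => ‖z‖) y b = s y := by
    rw [fderiv_norm_apply hy, real_inner_comm]
  rw [fderiv_fderiv_apply ((hs_smooth.fderiv_right le_rfl).differentiableAt one_ne_zero),
    hDs.fderiv_eq, fderiv_div_apply (f := fun z => ‖b‖ ^ 2 - s z ^ 2)
      ((hs_diff.pow 2).const_sub _) hnorm_diff (norm_ne_zero_iff.2 hy),
    fderiv_const_sub, fderiv_fun_pow 2 hs_diff]
  simp only [neg_apply, smul_apply, smul_eq_mul, hDs_y, hDnorm_y]
  have : ‖y‖ ≠ 0 := norm_ne_zero_iff.2 hy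
  field_simp
  ring

end InnerDivNorm

/-- for `s(y) = ⟪b, y⟫/‖y‖`, at every `y ≠ 0` the function `s` is twice
Fréchet differentiable and its second derivative evaluated at `(b, b)` equals
`-3·s(y)·(‖b‖² - s(y)²)/‖y‖²`. -/
theorem stmt_8 {E : Type*} [NormedAddCommGroup E] [InnerProductSpace ℝ E]
    (b : E) (s : E → ℝ) (hs : s = fun y => ⟪b, y⟫ / ‖y‖) :
    ∀ y : E, y ≠ 0 →
      DifferentiableAt ℝ s y ∧ DifferentiableAt ℝ (fderiv ℝ s) y ∧
      fderiv ℝ (fderiv ℝ s) y b b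
        = -3 * s y * (‖b‖ ^ 2 - (s y) ^ 2) / ‖y‖ ^ 2 := by
  subst hs
  intro y hy
  have hsmooth : ContDiffAt ℝ 2 (fun z : E => ⟪b, z⟫ / ‖z‖) y := contDiffAt_inner_div_norm b hy
  exact ⟨hsmooth.differentiableAt two_ne_zero,
    (hsmooth.fderiv_right le_rfl).differentiableAt one_ne_zero,
    fderiv_fderiv_inner_div_norm_apply_self b hy⟩
end
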